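/- If (a_n) is a strongly non density lifting invariant (strongly non dli) arithmetic sequence, then the statistically characterized subgroup t^s_{(d_n)}(T) is countable. -/

import Mathlib

open Filter Topology Set

noncomputable section

/-- The sequence of ratios `b n = a n / a (n-1)` of an arithmetic sequence. -/
def ratios (a : ℕ → ℕ) (n : ℕ) : ℕ := a n / a (n - 1)

/-- An arithmetic sequence: `a 0 = 1`, strictly increasing, each term divides the next. -/
def IsArithSeq (a : ℕ → ℕ) : Prop :=
  a 0 = 1 ∧ (∀ n, a n < a (n + 1)) ∧ (∀ n, a n ∣ a (n + 1))

/-- The indices `n_k` with `a k = d (n k)`: `n 0 = 1`, `n (k+1) = n k + (b (k+1) - 1)`. -/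
def nseq (a : ℕ → ℕ) : ℕ → ℕ
  | 0 => 1
  | k + 1 => nseq a k + (ratios a (k + 1) - 1)

/-- The lifting function `L(A) = ⋃_{k ∈ A} [n_{k-1}, n_k - 1]`. -/
def liftSet (a : ℕ → ℕ) (A : Set ℕ) : Set ℕ :=
  ⋃ k ∈ A, Set.Icc (nseq a (k - 1)) (nseq a k - 1)

/-- `A ⊆ ℕ` has natural density `δ`. -/
def HasDensity (A : Set ℕ) (δ : ℝ) : Prop :=
  Tendsto (fun n : ℕ => ((A ∩ Set.Iio n).ncard : ℝ) / n) atTop (𝓝 δ)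

/-- The upper natural density of `A ⊆ ℕ`. -/
def upperDensity (A : Set ℕ) : ℝ :=
  limsup (fun n : ℕ => ((A ∩ Set.Iio n).ncard : ℝ) / n) atTop

/-- The sequence `(d n)`: the increasing enumeration of `{r * a k : k ≥ 0, 1 ≤ r < b (k+1)}`. -/
def dSeq (a : ℕ → ℕ) : ℕ → ℕ :=
  Nat.nth (fun m => ∃ k r : ℕ, 1 ≤ r ∧ r < ratios a (k + 1) ∧ m = r * a k)

/-- The characterized subgroup `t_{(u n)}(𝕋)`. -/
def charSub (u : ℕ → ℤ) : Set (AddCircle (1 : ℝ)) :=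
  {x | Tendsto (fun n => u n • x) atTop (𝓝 0)}

/-- The statistically characterized subgroup `t^s_{(u n)}(𝕋)`. -/
def statChar (u : ℕ → ℤ) : Set (AddCircle (1 : ℝ)) :=
  {x | ∀ ε : ℝ, 0 < ε → HasDensity {n : ℕ | ε ≤ ‖u n • x‖} 0}

/-- Density lifting invariant. -/
def Dli (a : ℕ → ℕ) : Prop :=
  ∀ A : Set ℕ, A.Infinite → HasDensity A 0 → HasDensity (liftSet a A) 0

/-- Weakly density lifting invariant. -/
def WeaklyDli (a : ℕ → ℕ) : Prop :=
  ∃ A : Set ℕ, A.Infinite ∧ ∀ m : ℕ, HasDensity (liftSet a ((fun x => x - m) '' A)) 0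

/-- Strongly non density lifting invariant. -/
def StronglyNonDli (a : ℕ → ℕ) : Prop :=
  ∀ A : Set ℕ, A.Infinite → 0 < upperDensity (liftSet a A)

/-!
If `x` has infinite order, the multiples `a k • x` cannot satisfy
`‖a k • x‖ < 1 / (2 b (k + 1))` for all large `k`: then `‖a (k + 1) • x‖ = b (k + 1) ‖a k • x‖`
at each step, so the norms would double forever while staying `≤ 1 / 2`. For each of the
infinitely many `k` where the inequality fails, the block of indices `[n k, n (k + 1))` carries
the multiples `r • (a k • x)`, `2 ≤ r ≤ b (k + 1)`; pairing `r` with `r + s`, where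
`‖s • (a k • x)‖ ≥ 1 / 10`, shows that a tenth of them are at distance `≥ 1 / 20` from `0`.
When `x ∈ t^s_{(d n)}` those indices form a set of density zero, and a set of density zero
cannot fill a fixed proportion of every block of `L(A)` unless `L(A)` has density zero too,
which strong non dli forbids. Strong non dli also leaves only finitely many ratios `b k = 2`,
whose one-element blocks escape the count. Hence `t^s_{(d n)}` lies in the torsion subgroup,
which is countable.
-/

open scoped Finset

namespace AddCircle

theorem exists_coe_eq_abs_eq_norm (t : AddCircle (1 : ℝ)) :
    ∃ x : ℝ, (x : AddCircle (1 : ℝ)) = t ∧ |x| = ‖t‖ := by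
  induction t using QuotientAddGroup.induction_on with
  | H y =>
    refine ⟨y - round y, ?_, (UnitAddCircle.norm_eq (x := y)).symm⟩
    have hround : ((round y : ℝ) : AddCircle (1 : ℝ)) = 0 :=
      (AddCircle.coe_eq_zero_iff _).2 ⟨round y, by simp⟩
    rw [AddCircle.coe_sub, hround, sub_zero]

theorem norm_nsmul_eq_mul_norm {t : AddCircle (1 : ℝ)} {n : ℕ} (h : n * ‖t‖ ≤ 1 / 2) :
    ‖n • t‖ = n * ‖t‖ := by
  obtain ⟨x, rfl, hx⟩ := exists_coe_eq_abs_eq_norm t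
  rw [← AddCircle.coe_nsmul, nsmul_eq_mul, (norm_coe_eq_abs_iff _ one_ne_zero).2, abs_mul,
    Nat.abs_cast, hx]
  simpa [abs_mul, hx] using h

theorem countable_setOf_isOfFinAddOrder :
    {t : AddCircle (1 : ℝ) | IsOfFinAddOrder t}.Countable := by
  refine (Set.countable_iUnion fun n : ℕ => (finite_torsion (1 : ℝ) n.succ_pos).countable).mono ?_
  intro t ht
  obtain ⟨n, hn, hnt⟩ := isOfFinAddOrder_iff_nsmul_eq_zero.1 ht
  obtain ⟨m, rfl⟩ := Nat.exists_eq_add_one_of_ne_zero hn.ne'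
  exact Set.mem_iUnion.2 ⟨m, hnt⟩

end AddCircle

open Finset in
theorem card_le_add_two_mul_card_filter {P : ℕ → Prop} [DecidablePred P] {m s : ℕ}
    (h : ∀ r, r + s < m → P r ∨ P (r + s)) : m ≤ s + 2 * #{r ∈ range m | P r} := by
  have hnot : #{r ∈ range m | ¬P r} ≤ s + #{r ∈ range m | P r} := by
    calc #{r ∈ range m | ¬P r}
        ≤ #(Ico (m - s) m ∪ {r ∈ range m | P r}.image (· - s)) := by
          refine card_le_card fun r hr => ?_
          simp only [mem_filter, Finset.mem_range] at hr
          by_cases hrs : r + s < m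
          · refine mem_union_right _ (mem_image.2 ⟨r + s, ?_, by simp⟩)
            simpa [hrs] using (h r hrs).resolve_left hr.2
          · exact mem_union_left _ (mem_Ico.2 ⟨by omega, hr.1⟩)
      _ ≤ s + #{r ∈ range m | P r} := by
          grw [Finset.card_union_le, card_image_le, Nat.card_Ico]
          omega
  have hsplit := card_filter_add_card_filter_not (s := range m) (p := fun r => P r)
  rw [card_range] at hsplit
  omega

theorem AddCircle.exists_nsmul_norm_ge (t : AddCircle (1 : ℝ)) {b : ℕ} (hb : 0 < b)
    (ht : 1 / (2 * b) ≤ ‖t‖) : ∃ s : ℕ, (s : ℝ) ≤ b / 5 + 1 ∧ 1 / 10 ≤ ‖s • t‖ := by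
  by_cases hbig : 1 / 10 ≤ ‖t‖
  · exact ⟨1, by simp; positivity, by simpa using hbig⟩
  push Not at hbig
  replace hb : (0 : ℝ) < b := by exact_mod_cast hb
  have hpos : 0 < ‖t‖ := lt_of_lt_of_le (by positivity) ht
  have hinv : 1 / ‖t‖ ≤ 2 * b := by
    rw [div_le_iff₀ hpos]; rw [div_le_iff₀ (by positivity)] at ht; linarith
  set s := ⌈1 / (10 * ‖t‖)⌉₊
  have hs_ge : 1 / (10 * ‖t‖) ≤ s := Nat.le_ceil _
  have hs_lt : (s : ℝ) < 1 / (10 * ‖t‖) + 1 := Nat.ceil_lt_add_one (by positivity)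
  have hmul_ge : 1 / 10 ≤ s * ‖t‖ := by
    rw [div_le_iff₀ (by positivity)] at hs_ge; linarith
  have hmul_lt : s * ‖t‖ < 1 / 10 + ‖t‖ := by
    calc s * ‖t‖ < (1 / (10 * ‖t‖) + 1) * ‖t‖ := by gcongr
      _ = 1 / 10 + ‖t‖ := by field_simp
  refine ⟨s, ?_, ?_⟩
  · have : 1 / (10 * ‖t‖) = (1 / ‖t‖) / 10 := by field_simp
    rw [this] at hs_lt; linarith
  · rw [AddCircle.norm_nsmul_eq_mul_norm (by linarith)]
    exact hmul_ge

open Finset in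
theorem AddCircle.card_filter_norm_nsmul_ge (t : AddCircle (1 : ℝ)) {b : ℕ} (hb : 3 ≤ b)
    (ht : 1 / (2 * b) ≤ ‖t‖) :
    ((b : ℝ) - 1) / 10 ≤ #{i ∈ range (b - 1) | 1 / 20 ≤ ‖(i + 2) • t‖} := by
  obtain ⟨s, hsb, hst⟩ := t.exists_nsmul_norm_ge (by omega) ht
  have hcount := card_le_add_two_mul_card_filter (m := b - 1) (s := s)
    (P := fun i => 1 / 20 ≤ ‖(i + 2) • t‖) fun i _ => by
      have hsub : (i + s + 2) • t - (i + 2) • t = s • t := by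
        rw [show i + s + 2 = s + (i + 2) by omega, add_nsmul, add_sub_cancel_right]
      have := norm_sub_le ((i + s + 2) • t) ((i + 2) • t)
      rw [hsub] at this
      by_contra! hno
      linarith [hno.1, hno.2]
  have hcast : ((b - 1 : ℕ) : ℝ) = b - 1 := by rw [Nat.cast_sub (by omega)]; simp
  have hb' : (3 : ℝ) ≤ b := by exact_mod_cast hb
  have := (Nat.cast_le (α := ℝ)).2 hcount
  push_cast [hcast] at this
  linarith

theorem HasDensity.upperDensity_eq {A : Set ℕ} {δ : ℝ} (h : HasDensity A δ) :
    upperDensity A = δ :=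
  h.limsup_eq

theorem HasDensity.zero_of_ncard_le {S T : Set ℕ} (hT : HasDensity T 0)
    (h : ∀ N, (S ∩ Iio N).ncard ≤ (T ∩ Iio N).ncard) : HasDensity S 0 :=
  squeeze_zero (fun N => by positivity)
    (fun N => div_le_div_of_nonneg_right (by exact_mod_cast h N) (by positivity)) hT

theorem hasDensity_zero_of_forall_exists_ge {B C : Set ℕ} {c : ℝ} (hc : 0 < c)
    (hB : HasDensity B 0)
    (h : ∀ N, ∃ M ≥ N, c * ((C ∩ Iio N).ncard / N) ≤ (B ∩ Iio M).ncard / M) :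
    HasDensity C 0 := by
  refine tendsto_order.2 ⟨fun ε hε => Eventually.of_forall fun N => hε.trans_le (by positivity),
    fun ε hε => ?_⟩
  obtain ⟨N₀, hN₀⟩ := eventually_atTop.1 (tendsto_order.1 hB |>.2 (c * ε) (by positivity))
  refine eventually_atTop.2 ⟨N₀, fun N hN => ?_⟩
  obtain ⟨M, hMN, hM⟩ := h N
  exact lt_of_mul_lt_mul_left (hM.trans_lt (hN₀ M (hN.trans hMN))) hc.le

theorem tendsto_natSqrt_add_one_div :
    Tendsto (fun N : ℕ => ((Nat.sqrt N : ℝ) + 1) / N) atTop (𝓝 0) := by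
  have hlim : Tendsto (fun N : ℕ => 2 * (√(N : ℝ))⁻¹) atTop (𝓝 0) := by
    simpa using ((tendsto_inv_atTop_zero.comp
      (Real.tendsto_sqrt_atTop.comp tendsto_natCast_atTop_atTop)).const_mul 2)
  refine squeeze_zero' (Eventually.of_forall fun N => by positivity) ?_ hlim
  filter_upwards [eventually_ge_atTop 1] with N hN
  have hN' : (1 : ℝ) ≤ N := by exact_mod_cast hN
  have hsqrt : (1 : ℝ) ≤ √(N : ℝ) := Real.one_le_sqrt.2 hN'
  have hsq : √(N : ℝ) * √(N : ℝ) = N := Real.mul_self_sqrt (by positivity)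
  rw [div_le_iff₀ (by positivity)]
  calc (Nat.sqrt N : ℝ) + 1 ≤ √(N : ℝ) + √(N : ℝ) := by
        gcongr
        exact Real.nat_sqrt_le_real_sqrt
    _ = 2 * (√(N : ℝ))⁻¹ * (√(N : ℝ) * √(N : ℝ)) := by field_simp; ring
    _ = 2 * (√(N : ℝ))⁻¹ * N := by rw [hsq]

theorem Set.Infinite.exists_subset_hasDensity_zero {S : Set ℕ} (hS : S.Infinite) :
    ∃ A ⊆ S, A.Infinite ∧ HasDensity A 0 := by
  set f : ℕ → ℕ := fun i => Nat.nth (· ∈ S) (i * i)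
  have hf : StrictMono f :=
    (Nat.nth_strictMono hS).comp fun i j hij => Nat.mul_self_lt_mul_self hij
  refine ⟨Set.range f, Set.range_subset_iff.2 fun i => Nat.nth_mem_of_infinite hS _,
    Set.infinite_range_of_injective hf.injective, ?_⟩
  refine squeeze_zero (fun N => by positivity) (fun N => ?_) tendsto_natSqrt_add_one_div
  have hsub : Set.range f ∩ Iio N ⊆ f '' Iio (Nat.sqrt N + 1) := by
    rintro _ ⟨⟨i, rfl⟩, hi⟩
    refine ⟨i, Nat.lt_succ_of_le (Nat.le_sqrt.2 ?_), rfl⟩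
    exact ((Nat.nth_strictMono hS).le_apply.trans_lt hi).le
  have hcard : (Set.range f ∩ Iio N).ncard ≤ Nat.sqrt N + 1 :=
    (Set.ncard_le_ncard hsub ((Set.finite_Iio _).image f)).trans
      ((Set.ncard_image_le (Set.finite_Iio _)).trans (Set.ncard_Iio_nat _).le)
  gcongr
  exact_mod_cast hcard

theorem ncard_inter_Iio_add_ncard_inter_Ico (S : Set ℕ) {N M : ℕ} (h : N ≤ M) :
    (S ∩ Iio N).ncard + (S ∩ Ico N M).ncard = (S ∩ Iio M).ncard := by
  rw [← Set.ncard_union_eq _ ((Set.finite_Iio N).inter_of_right S)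
    ((Set.finite_Ico N M).inter_of_right S)]
  · rw [← Set.inter_union_distrib_left, Set.Iio_union_Ico_eq_Iio h]
  · exact Set.disjoint_left.2 fun n h1 h2 => absurd h1.2 (not_lt.2 h2.2.1)

section Blocks

variable {e : ℕ → ℕ} {A B : Set ℕ} {c : ℝ}

theorem biUnion_Ico_inter_Ico_eq_empty (he : Monotone e) {j : ℕ} (hj : j ∉ A) :
    (⋃ k ∈ A, Ico (e (k - 1)) (e k)) ∩ Ico (e (j - 1)) (e j) = ∅ := by
  refine Set.eq_empty_of_forall_notMem fun n hn => ?_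
  simp only [Set.mem_inter_iff, Set.mem_iUnion, Set.mem_Ico] at hn
  obtain ⟨⟨k, hk, hk1, hk2⟩, hj1, hj2⟩ := hn
  rcases lt_trichotomy k j with hkj | rfl | hjk
  · have := he (show k ≤ j - 1 by omega); omega
  · exact hj hk
  · have := he (show j ≤ k - 1 by omega); omega

theorem biUnion_Ico_inter_Iio_eq_empty (he : Monotone e) {N : ℕ} (hN : N ≤ e 0) :
    (⋃ k ∈ A, Ico (e (k - 1)) (e k)) ∩ Iio N = ∅ := by
  refine Set.eq_empty_of_forall_notMem fun n hn => ?_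
  simp only [Set.mem_inter_iff, Set.mem_iUnion, Set.mem_Ico, Set.mem_Iio] at hn
  obtain ⟨⟨k, -, hk1, -⟩, hn⟩ := hn
  have := he (Nat.zero_le (k - 1))
  omega

theorem mul_ncard_biUnion_Ico_inter_Iio_le (he : Monotone e)
    (hblock : ∀ k ∈ A, c * (Ico (e (k - 1)) (e k)).ncard ≤ (B ∩ Ico (e (k - 1)) (e k)).ncard)
    (j : ℕ) :
    c * ((⋃ k ∈ A, Ico (e (k - 1)) (e k)) ∩ Iio (e j)).ncard ≤ (B ∩ Iio (e j)).ncard := by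
  induction j with
  | zero => simp [biUnion_Ico_inter_Iio_eq_empty he le_rfl]
  | succ j ih =>
    have hstep := hblock (j + 1)
    simp only [Nat.add_sub_cancel] at hstep
    rw [← ncard_inter_Iio_add_ncard_inter_Ico _ (he (Nat.le_add_right j 1)),
      ← ncard_inter_Iio_add_ncard_inter_Ico B (he (Nat.le_add_right j 1))]
    push_cast
    by_cases hj : j + 1 ∈ A
    · have hsub : Ico (e j) (e (j + 1)) ⊆ ⋃ k ∈ A, Ico (e (k - 1)) (e k) :=
        Set.subset_biUnion_of_mem (u := fun k => Ico (e (k - 1)) (e k)) hj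
      rw [Set.inter_eq_right.2 hsub]
      linarith [hstep hj]
    · have := biUnion_Ico_inter_Ico_eq_empty he hj
      simp only [Nat.add_sub_cancel] at this
      rw [this, Set.ncard_empty]
      push_cast
      linarith

theorem exists_ge_mul_ncard_div_le (he : StrictMono e) (hc : 0 ≤ c)
    (hblock : ∀ k ∈ A, c * (Ico (e (k - 1)) (e k)).ncard ≤ (B ∩ Ico (e (k - 1)) (e k)).ncard)
    (N : ℕ) : ∃ M ≥ N, c * (((⋃ k ∈ A, Ico (e (k - 1)) (e k)) ∩ Iio N).ncard / N) ≤
      (B ∩ Iio M).ncard / M := by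
  classical
  set C := ⋃ k ∈ A, Ico (e (k - 1)) (e k)
  by_cases hN : N ≤ e 0
  · refine ⟨N, le_rfl, ?_⟩
    rw [biUnion_Ico_inter_Iio_eq_empty he.monotone hN]
    simp only [Set.ncard_empty, Nat.cast_zero, zero_div, mul_zero]
    positivity
  have hex : ∃ j, N ≤ e j := ⟨N, he.le_apply⟩
  obtain ⟨i, hi⟩ : ∃ i, Nat.find hex = i + 1 :=
    Nat.exists_eq_add_one_of_ne_zero fun h0 => hN (h0 ▸ Nat.find_spec hex)
  have hlo : e i < N := not_le.1 (Nat.find_min hex (by omega))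
  have hhi : N ≤ e (i + 1) := hi ▸ Nat.find_spec hex
  have hC := mul_ncard_biUnion_Ico_inter_Iio_le he.monotone hblock
  have hNpos : (0 : ℝ) < N := by exact_mod_cast (Nat.zero_le _).trans_lt hlo
  -- If `N` cuts an `A`-block, pass to the end of that block: this can only raise the
  -- proportion of `C`, and there the count of `B` controls that of `C`.
  by_cases hA : i + 1 ∈ A
  · refine ⟨e (i + 1), hhi, ?_⟩
    have hsub : Ico N (e (i + 1)) ⊆ C := (Set.Ico_subset_Ico_left hlo.le).trans
      (Set.subset_biUnion_of_mem (u := fun k => Ico (e (k - 1)) (e k)) hA)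
    have hfM := ncard_inter_Iio_add_ncard_inter_Ico C hhi
    rw [Set.inter_eq_right.2 hsub, Set.ncard_Ico_nat] at hfM
    have hfN : (C ∩ Iio N).ncard ≤ N :=
      (Set.ncard_le_ncard Set.inter_subset_right (Set.finite_Iio N)).trans (Set.ncard_Iio_nat N).le
    have hfN' : ((C ∩ Iio N).ncard : ℝ) ≤ N := by exact_mod_cast hfN
    have hMN : (N : ℝ) ≤ e (i + 1) := by exact_mod_cast hhi
    have hfM' : ((C ∩ Iio (e (i + 1))).ncard : ℝ) = (C ∩ Iio N).ncard + (e (i + 1) - N) := by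
      rw [← hfM]; push_cast [Nat.cast_sub hhi]; ring
    have hmediant : ((C ∩ Iio N).ncard : ℝ) / N ≤ (C ∩ Iio (e (i + 1))).ncard / e (i + 1) := by
      rw [div_le_div_iff₀ hNpos (hNpos.trans_le hMN), hfM']
      nlinarith
    calc c * (((C ∩ Iio N).ncard : ℝ) / N)
        ≤ c * ((C ∩ Iio (e (i + 1))).ncard / e (i + 1)) := by gcongr
      _ ≤ (B ∩ Iio (e (i + 1))).ncard / e (i + 1) := by
        rw [← mul_div_assoc]; gcongr; exact hC (i + 1)
  · refine ⟨N, le_rfl, ?_⟩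
    have hempty : C ∩ Ico (e i) N = ∅ := Set.subset_eq_empty
      (Set.inter_subset_inter_right _ (Set.Ico_subset_Ico_right hhi))
      (biUnion_Ico_inter_Ico_eq_empty he.monotone hA)
    have hf := ncard_inter_Iio_add_ncard_inter_Ico C hlo.le
    have hg := ncard_inter_Iio_add_ncard_inter_Ico B hlo.le
    rw [hempty, Set.ncard_empty, add_zero] at hf
    rw [← mul_div_assoc, ← hf, ← hg]
    gcongr
    push_cast
    linarith [hC i]

theorem hasDensity_biUnion_Ico_zero (he : StrictMono e) (hc : 0 < c) (hB : HasDensity B 0)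
    (hblock : ∀ k ∈ A, c * (Ico (e (k - 1)) (e k)).ncard ≤ (B ∩ Ico (e (k - 1)) (e k)).ncard) :
    HasDensity (⋃ k ∈ A, Ico (e (k - 1)) (e k)) 0 :=
  hasDensity_zero_of_forall_exists_ge hc hB (exists_ge_mul_ncard_div_le he hc.le hblock)

end Blocks

namespace IsArithSeq

variable {a : ℕ → ℕ}

theorem strictMono (ha : IsArithSeq a) : StrictMono a := strictMono_nat_of_lt_succ ha.2.1

theorem pos (ha : IsArithSeq a) (k : ℕ) : 0 < a k := by
  simpa [ha.1, Nat.one_le_iff_ne_zero, Nat.pos_iff_ne_zero] using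
    ha.strictMono.monotone (Nat.zero_le k)

theorem ratios_mul (ha : IsArithSeq a) (k : ℕ) : ratios a (k + 1) * a k = a (k + 1) :=
  Nat.div_mul_cancel (ha.2.2 k)

theorem two_le_ratios (ha : IsArithSeq a) (k : ℕ) : 2 ≤ ratios a (k + 1) := by
  by_contra! h
  have := ha.ratios_mul k
  have := ha.2.1 k
  interval_cases ratios a (k + 1) <;> omega

theorem nseq_strictMono (ha : IsArithSeq a) : StrictMono (nseq a) :=
  strictMono_nat_of_lt_succ fun k => by
    have := ha.two_le_ratios k
    simp only [nseq]
    omega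

theorem lt_nseq (ha : IsArithSeq a) (k : ℕ) : k < nseq a k := by
  simpa [nseq] using ha.nseq_strictMono.add_le_nat k 0

theorem liftSet_eq (ha : IsArithSeq a) (A : Set ℕ) :
    liftSet a A = ⋃ k ∈ A, Ico (nseq a (k - 1)) (nseq a k) := by
  refine Set.iUnion₂_congr fun k _ => Set.ext fun n => ?_
  have := ha.lt_nseq k
  simp only [Set.mem_Icc, Set.mem_Ico]
  omega

end IsArithSeq

def IsDTerm (a : ℕ → ℕ) (m : ℕ) : Prop :=
  ∃ k r : ℕ, 1 ≤ r ∧ r < ratios a (k + 1) ∧ m = r * a k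

theorem dSeq_eq_nth (a : ℕ → ℕ) : dSeq a = Nat.nth (IsDTerm a) := rfl

namespace IsArithSeq

variable {a : ℕ → ℕ}

section Counting

open Classical

theorem isDTerm_iff (ha : IsArithSeq a) {k r m : ℕ} (hr : 1 ≤ r) (hrk : r < ratios a (k + 1))
    (hm : r * a k ≤ m) (hm' : m < (r + 1) * a k) : IsDTerm a m ↔ m = r * a k := by
  refine ⟨?_, fun h => ⟨k, r, hr, hrk, h⟩⟩
  rintro ⟨i, j, hj, hji, rfl⟩
  have hnext : j * a i < a (i + 1) := by
    rw [← ha.ratios_mul i]; exact Nat.mul_lt_mul_of_pos_right hji (ha.pos i)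
  rcases lt_trichotomy i k with hik | rfl | hki
  · have : a (i + 1) ≤ a k := ha.strictMono.monotone hik
    nlinarith
  · have : j < r + 1 := lt_of_mul_lt_mul_right hm' (Nat.zero_le _)
    have : r ≤ j := le_of_mul_le_mul_right hm (ha.pos i)
    rw [show j = r by omega]
  · have : a (k + 1) ≤ a i := ha.strictMono.monotone hki
    have : (r + 1) * a k ≤ a (k + 1) := by
      rw [← ha.ratios_mul k]; exact Nat.mul_le_mul_right _ hrk
    nlinarith

theorem count_isDTerm_succ_mul (ha : IsArithSeq a) {k r : ℕ} (hr : 1 ≤ r)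
    (hrk : r < ratios a (k + 1)) :
    Nat.count (IsDTerm a) ((r + 1) * a k) = Nat.count (IsDTerm a) (r * a k) + 1 := by
  rw [add_one_mul, Nat.count_add, add_right_inj, Nat.count_eq_card_filter_range,
    Finset.card_eq_one]
  refine ⟨0, Finset.ext fun j => ?_⟩
  simp only [Finset.mem_filter, Finset.mem_range, Finset.mem_singleton]
  constructor
  · rintro ⟨hj, hd⟩
    rw [ha.isDTerm_iff hr hrk (by omega) (by rw [add_one_mul]; omega)] at hd
    omega
  · rintro rfl
    exact ⟨ha.pos k, k, r, hr, hrk, rfl⟩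

theorem count_isDTerm_mul (ha : IsArithSeq a) {k r : ℕ} (hr : 1 ≤ r)
    (hrk : r ≤ ratios a (k + 1)) :
    Nat.count (IsDTerm a) (r * a k) = Nat.count (IsDTerm a) (a k) + (r - 1) := by
  induction r, hr using Nat.le_induction with
  | base => simp
  | succ r hr ih =>
    rw [ha.count_isDTerm_succ_mul hr (by omega), ih (by omega)]
    omega

theorem count_isDTerm_eq (ha : IsArithSeq a) (k : ℕ) :
    Nat.count (IsDTerm a) (a k) = nseq a k - 1 := by
  induction k with
  | zero =>
    rw [ha.1, Nat.count_one, if_neg]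
    · rfl
    rintro ⟨i, j, hj, -, h0⟩
    have := ha.pos i
    have : 0 < j * a i := by positivity
    omega
  | succ k ih =>
    have := ha.two_le_ratios k
    rw [← ha.ratios_mul k, ha.count_isDTerm_mul (by omega) le_rfl, ih]
    have := ha.lt_nseq k
    simp only [nseq]
    omega

theorem dSeq_nseq_add (ha : IsArithSeq a) {k i : ℕ} (hi : i + 2 ≤ ratios a (k + 1)) :
    dSeq a (nseq a k + i) = (i + 2) * a k := by
  have hterm : IsDTerm a ((i + 2) * a k) := by
    rcases hi.lt_or_eq with hlt | heq
    · exact ⟨k, i + 2, by omega, hlt, rfl⟩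
    · exact ⟨k + 1, 1, le_rfl, ha.two_le_ratios (k + 1), by rw [heq, ha.ratios_mul, one_mul]⟩
  rw [dSeq_eq_nth, ← Nat.nth_count hterm, ha.count_isDTerm_mul (by omega) hi,
    ha.count_isDTerm_eq]
  have := ha.lt_nseq k
  congr 1
  omega

theorem ncard_inter_Ico_nseq (ha : IsArithSeq a) (x : AddCircle (1 : ℝ)) (ε : ℝ) (k : ℕ) :
    ({n | ε ≤ ‖(dSeq a n : ℤ) • x‖} ∩ Ico (nseq a k) (nseq a (k + 1))).ncard =
      #{i ∈ Finset.range (ratios a (k + 1) - 1) | ε ≤ ‖(i + 2) • a k • x‖} := by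
  rw [← Set.ncard_coe_finset, eq_comm,
    ← Set.ncard_image_of_injective _ (add_right_injective (nseq a k))]
  congr 1
  ext n
  simp only [Set.mem_inter_iff, Set.mem_ofPred_eq, Set.mem_Ico, Finset.coe_filter,
    Finset.mem_range, Set.mem_image, nseq]
  constructor
  · rintro ⟨i, ⟨hi, hε⟩, rfl⟩
    refine ⟨?_, by omega, by omega⟩
    rwa [ha.dSeq_nseq_add (by omega), natCast_zsmul, mul_smul]
  · rintro ⟨hε, h1, h2⟩
    rw [← Nat.add_sub_cancel' h1, ha.dSeq_nseq_add (by omega), natCast_zsmul, mul_smul] at hε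
    exact ⟨n - nseq a k, ⟨by omega, hε⟩, by omega⟩

end Counting

theorem ncard_far_inter_Ico_nseq_ge (ha : IsArithSeq a) {x : AddCircle (1 : ℝ)} {k : ℕ}
    (hb : 3 ≤ ratios a (k + 1)) (hfar : 1 / (2 * ratios a (k + 1)) ≤ ‖a k • x‖) :
    (1 / 10 : ℝ) * (Ico (nseq a k) (nseq a (k + 1))).ncard ≤
      ({n | 1 / 20 ≤ ‖(dSeq a n : ℤ) • x‖} ∩ Ico (nseq a k) (nseq a (k + 1))).ncard := by
  rw [ha.ncard_inter_Ico_nseq, Set.ncard_Ico_nat, nseq, Nat.add_sub_cancel_left,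
    Nat.cast_sub (by omega)]
  have := AddCircle.card_filter_norm_nsmul_ge (a k • x) hb hfar
  push_cast
  linarith

theorem eventually_three_le_ratios (ha : IsArithSeq a) (h : StronglyNonDli a) :
    ∀ᶠ k in atTop, 3 ≤ ratios a (k + 1) := by
  by_contra hfreq
  obtain ⟨A₀, hA₀S, hA₀, hA₀d⟩ := (Nat.frequently_atTop_iff_infinite.1
    (not_eventually.1 hfreq)).exists_subset_hasDensity_zero
  have hlift : liftSet a ((· + 1) '' A₀) = nseq a '' A₀ := by
    rw [ha.liftSet_eq, Set.biUnion_image, Set.image_eq_iUnion]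
    refine Set.iUnion₂_congr fun k hk => ?_
    have := ha.two_le_ratios k
    have : ¬ 3 ≤ ratios a (k + 1) := hA₀S hk
    simp only [Nat.add_sub_cancel, nseq]
    ext n; simp only [Set.mem_Ico, Set.mem_singleton_iff]; omega
  have hdens : HasDensity (liftSet a ((· + 1) '' A₀)) 0 := by
    refine hA₀d.zero_of_ncard_le fun N => ?_
    rw [hlift]
    have hfin := (Set.finite_Iio N).inter_of_right A₀
    refine (Set.ncard_le_ncard (t := nseq a '' (A₀ ∩ Iio N)) ?_ (hfin.image _)).trans
      (Set.ncard_image_le hfin)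
    rintro _ ⟨⟨k, hk, rfl⟩, hkN⟩
    exact ⟨k, ⟨hk, (ha.lt_nseq k).trans hkN⟩, rfl⟩
  exact (h _ (hA₀.image (add_left_injective 1).injOn)).ne' hdens.upperDensity_eq

theorem isOfFinAddOrder_of_eventually_norm_lt (ha : IsArithSeq a) {x : AddCircle (1 : ℝ)}
    (h : ∀ᶠ k in atTop, ‖a k • x‖ < 1 / (2 * ratios a (k + 1))) : IsOfFinAddOrder x := by
  obtain ⟨K, hK⟩ := eventually_atTop.1 h
  have hdouble : ∀ k ≥ K, 2 * ‖a k • x‖ ≤ ‖a (k + 1) • x‖ := by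
    intro k hk
    have hb : (2 : ℝ) ≤ ratios a (k + 1) := by exact_mod_cast ha.two_le_ratios k
    have hsmall : (ratios a (k + 1) : ℝ) * ‖a k • x‖ ≤ 1 / 2 := by
      have := hK k hk
      rw [lt_div_iff₀ (by positivity)] at this
      linarith
    rw [← ha.ratios_mul k, mul_smul, AddCircle.norm_nsmul_eq_mul_norm hsmall]
    gcongr
  have hpow : ∀ j, 2 ^ j * ‖a K • x‖ ≤ ‖a (K + j) • x‖ := by
    intro j
    induction j with
    | zero => simp
    | succ j ih => rw [pow_succ', mul_assoc, ← add_assoc]; linarith [hdouble (K + j) (by omega)]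
  have hzero : ‖a K • x‖ = 0 := by
    by_contra hne
    have hpos : 0 < ‖a K • x‖ := (norm_nonneg _).lt_of_ne' hne
    obtain ⟨j, hj⟩ := pow_unbounded_of_one_lt (1 / ‖a K • x‖) (one_lt_two (α := ℝ))
    have := (hpow j).trans (AddCircle.norm_le_half_period _ one_ne_zero)
    rw [div_lt_iff₀ hpos] at hj
    norm_num at this
    linarith
  exact isOfFinAddOrder_iff_nsmul_eq_zero.2 ⟨a K, ha.pos K, norm_eq_zero.1 hzero⟩

end IsArithSeq

/-- if `(a n)` is strongly non dli then `t^s_{(d n)}(𝕋)` is countable. -/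
theorem statChar_countable_of_stronglyNonDli (a : ℕ → ℕ) (ha : IsArithSeq a)
    (h : StronglyNonDli a) :
    (statChar (fun n => (dSeq a n : ℤ))).Countable := by
  refine AddCircle.countable_setOf_isOfFinAddOrder.mono fun x hx => by_contra fun htors => ?_
  have hfar : {k | 1 / (2 * ratios a (k + 1)) ≤ ‖a k • x‖}.Infinite :=
    Nat.frequently_atTop_iff_infinite.1 fun hnear =>
      htors (ha.isOfFinAddOrder_of_eventually_norm_lt (hnear.mono fun _ => not_le.1))
  obtain ⟨K, hK⟩ := eventually_atTop.1 (ha.eventually_three_le_ratios h)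
  set A := (· + 1) '' ({k | 1 / (2 * ratios a (k + 1)) ≤ ‖a k • x‖} \ Iio K)
  have hA : A.Infinite := (hfar.sdiff (Set.finite_Iio K)).image (add_left_injective 1).injOn
  have hblock : ∀ k ∈ A, (1 / 10 : ℝ) * (Ico (nseq a (k - 1)) (nseq a k)).ncard ≤
      ({n | 1 / 20 ≤ ‖(dSeq a n : ℤ) • x‖} ∩ Ico (nseq a (k - 1)) (nseq a k)).ncard := by
    rintro _ ⟨k, ⟨hk, hKk⟩, rfl⟩
    exact ha.ncard_far_inter_Ico_nseq_ge (hK k (not_lt.1 hKk)) hk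
  have hdens := hasDensity_biUnion_Ico_zero ha.nseq_strictMono (by norm_num) (hx _ (by norm_num))
    hblock
  rw [← ha.liftSet_eq] at hdens
  exact (h A hA).ne' hdens.upperDensity_eq
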